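/- Let A ∈ B(H) be a difference of orthogonal projections, i.e., assume there exist orthogonal projections P, Q on H with P - Q = A. Then the set {(P,Q) : P, Q orthogonal projections on H, P - Q = A} consists of exactly one pair if and only if A is a symmetry, i.e., A is a selfadjoint unitary (equivalently A* = A and A² = 1). -/

import Mathlib

open ContinuousLinearMap

variable {H : Type*} [NormedAddCommGroup H] [InnerProductSpace ℂ H] [CompleteSpace H]

/-- An orthogonal projection: a selfadjoint idempotent bounded operator. -/
def IsOrthogonalProjection (P : H →L[ℂ] H) : Prop :=
  IsSelfAdjoint P ∧ P * P = P

/-- A symmetry: a selfadjoint unitary operator. -/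
def IsSymmetry (V : H →L[ℂ] H) : Prop :=
  IsSelfAdjoint V ∧ V * V = 1

/-- Two orthogonal projections are in generic position if the four canonical
intersections of their ranges and kernels are trivial. -/
def GenericPosition (P Q : H →L[ℂ] H) : Prop :=
  LinearMap.range (P : H →ₗ[ℂ] H) ⊓ LinearMap.range (Q : H →ₗ[ℂ] H) = ⊥ ∧
  LinearMap.range (P : H →ₗ[ℂ] H) ⊓ LinearMap.ker (Q : H →ₗ[ℂ] H) = ⊥ ∧
  LinearMap.ker (P : H →ₗ[ℂ] H) ⊓ LinearMap.range (Q : H →ₗ[ℂ] H) = ⊥ ∧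
  LinearMap.ker (P : H →ₗ[ℂ] H) ⊓ LinearMap.ker (Q : H →ₗ[ℂ] H) = ⊥

/-!
If `P - Q = A` with `P`, `Q` orthogonal projections, then `(1 - Q, 1 - P)` is another such pair,
so uniqueness forces `P + Q = 1`, and then `A = 2P - 1` is a symmetry. Conversely, if `A² = 1`
then expanding `P (P - Q)² P = P` gives `PQP = 0`, i.e. `(QP)* (QP) = 0`; the C⋆-identity makes
`P` and `Q` orthogonal, whence `P + Q = (P - Q)² = 1` and `P = (1 + A) / 2` is determined by `A`.
-/

theorem eq_and_eq_of_add_eq_add_of_sub_eq_sub {M : Type*} [AddCommGroup M] [IsAddTorsionFree M]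
    {a b c d : M} (hadd : a + b = c + d) (hsub : a - b = c - d) : a = c ∧ b = d := by
  have ha : 2 • a = 2 • c :=
    calc 2 • a = (a + b) + (a - b) := by abel
      _ = (c + d) + (c - d) := by rw [hadd, hsub]
      _ = 2 • c := by abel
  have hac := nsmul_right_injective two_ne_zero ha
  exact ⟨hac, by rw [hac] at hadd; exact add_left_cancel hadd⟩

namespace IsStarProjection

theorem mul_eq_zero_of_mul_mul_eq_zero {R : Type*} [NonUnitalNormedRing R] [StarRing R]
    [CStarRing R] {p q : R} (hq : IsStarProjection q) (hp : IsSelfAdjoint p)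
    (h : p * q * p = 0) : q * p = 0 := by
  rw [← CStarRing.star_mul_self_eq_zero_iff, star_mul, hp.star_eq, hq.isSelfAdjoint.star_eq,
    ← mul_assoc, mul_assoc p, hq.isIdempotentElem.eq, h]

variable {R : Type*} [NormedRing R] [StarRing R] [CStarRing R] {p q : R}

theorem sub_mul_self_eq_one_iff_add_eq_one (hp : IsStarProjection p) (hq : IsStarProjection q) :
    (p - q) * (p - q) = 1 ↔ p + q = 1 := by
  have hsq : (p - q) * (p - q) = p + q - p * q - q * p := by
    simp only [sub_mul, mul_sub, hp.isIdempotentElem.eq, hq.isIdempotentElem.eq]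
    abel
  constructor
  · intro h
    have hpqp : p * q * p = 0 := by
      have hpp : p * q * p * p = p * q * p := by rw [mul_assoc, hp.isIdempotentElem.eq]
      refine sub_eq_self.mp (?_ : p - p * q * p = p)
      calc p - p * q * p = p * ((p - q) * (p - q)) * p := by
            simp only [hsq, mul_add, add_mul, mul_sub, sub_mul, ← mul_assoc, hpp,
              hp.isIdempotentElem.eq]
            abel
        _ = p := by rw [h, mul_one, hp.isIdempotentElem.eq]
    have hqp := hq.mul_eq_zero_of_mul_mul_eq_zero hp.isSelfAdjoint hpqp
    have hpq : p * q = 0 := by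
      simpa [hp.isSelfAdjoint.star_eq, hq.isSelfAdjoint.star_eq] using congrArg star hqp
    rwa [hsq, hpq, hqp, sub_zero, sub_zero] at h
  · intro h
    obtain rfl : q = 1 - p := eq_sub_of_add_eq' h
    rw [hsq, h, hp.mul_one_sub_self, hp.one_sub_mul_self, sub_zero, sub_zero]

end IsStarProjection

theorem isOrthogonalProjection_iff_isStarProjection (P : H →L[ℂ] H) :
    IsOrthogonalProjection P ↔ IsStarProjection P :=
  ⟨fun h => ⟨h.2, h.1⟩, fun h => ⟨h.2, h.1⟩⟩

theorem diff_pair_unique_iff_symmetry (A : H →L[ℂ] H)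
    (h : ∃ P Q : H →L[ℂ] H,
      IsOrthogonalProjection P ∧ IsOrthogonalProjection Q ∧ P - Q = A) :
    (∃! PQ : (H →L[ℂ] H) × (H →L[ℂ] H),
        IsOrthogonalProjection PQ.1 ∧ IsOrthogonalProjection PQ.2 ∧ PQ.1 - PQ.2 = A) ↔
      (IsSelfAdjoint A ∧ A * A = 1) := by
  have : IsAddTorsionFree (H →L[ℂ] H) := .of_isTorsionFree ℂ _
  simp only [isOrthogonalProjection_iff_isStarProjection] at h ⊢
  obtain ⟨P, Q, hP, hQ, rfl⟩ := h
  constructor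
  · rintro ⟨_, -, huniq⟩
    have hcompl : (1 - Q) - (1 - P) = P - Q := sub_sub_sub_cancel_left _ _ _
    have hPQ : P = 1 - Q := congrArg Prod.fst <| (huniq (P, Q) ⟨hP, hQ, rfl⟩).trans
      (huniq (1 - Q, 1 - P) ⟨hQ.one_sub, hP.one_sub, hcompl⟩).symm
    exact ⟨hP.isSelfAdjoint.sub hQ.isSelfAdjoint,
      (hP.sub_mul_self_eq_one_iff_add_eq_one hQ).2 (eq_sub_iff_add_eq.1 hPQ)⟩
  · rintro ⟨-, hA⟩
    refine ⟨(P, Q), ⟨hP, hQ, rfl⟩, ?_⟩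
    rintro ⟨R, S⟩ ⟨hR, hS, hRS⟩
    have hRS_add := (hR.sub_mul_self_eq_one_iff_add_eq_one hS).1 (hRS ▸ hA)
    have hPQ_add := (hP.sub_mul_self_eq_one_iff_add_eq_one hQ).1 hA
    obtain ⟨rfl, rfl⟩ := eq_and_eq_of_add_eq_add_of_sub_eq_sub (hRS_add.trans hPQ_add.symm) hRS
    rfl
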